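/- Let k be a natural number and let L be a first-order language whose symbols consist of exactly k unary relation symbols (no function symbols, no constant symbols, no relation symbols of other arities). Let φ be an L-sentence in which the equality symbol does not occur (i.e., no atomic subformula of φ is of the form t₁ = t₂). If φ has a model, then φ has a model whose domain has cardinality at most 2^k. (The bound 2^k for monadic sentences, from Hilbert's 1922/23 lectures, discussed in the paper.) -/

import Mathlib

open FirstOrder Language

/-- The first-order language whose symbols are exactly `k` unary relation symbols. -/
def monadicLang (k : ℕ) : FirstOrder.Language where
  Functions := fun _ => Empty
  Relations := fun n => match n with
    | 1 => Fin k
    | _ => Empty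

/-- A bounded formula is equality-free if it contains no atomic subformula built with the
equality symbol. -/
def EqualityFree {L : FirstOrder.Language} {α : Type*} :
    ∀ {n : ℕ}, L.BoundedFormula α n → Prop
  | _, .falsum => True
  | _, .equal _ _ => False
  | _, .rel _ _ => True
  | _, .imp f g => EqualityFree f ∧ EqualityFree g
  | _, .all f => EqualityFree f

/-!
Identify two elements of a model when they satisfy the same unary predicates. With no function
symbols and only unary relations this is a congruence, so the quotient is again a structure, and
the quotient map preserves and reflects every atomic formula other than an equation. By
surjectivity it then preserves every equality-free formula, quantifiers included. The quotient
embeds into the set of subsets of the `k` predicates, so it has at most `2 ^ k` elements.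
-/

section Quotient

variable {L : Language} {M : Type*} {s : Setoid M} [ps : L.Prestructure s]

theorem EqualityFree.realize_quotient_mk' {α : Type*} {n : ℕ} {φ : L.BoundedFormula α n}
    (hφ : EqualityFree φ) (v : α → M) (xs : Fin n → M) :
    φ.Realize (Quotient.mk s ∘ v) (Quotient.mk s ∘ xs) ↔
      @BoundedFormula.Realize _ _ ps.toStructure _ _ φ v xs := by
  induction φ with
  | falsum => rfl
  | equal => exact hφ.elim
  | rel R ts =>
    simp only [BoundedFormula.Realize]
    rw [← Sum.comp_elim]
    simp only [Function.comp_def, Term.realize_quotient_mk']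
    exact relMap_quotient_mk' s R _
  | imp _ _ ihφ ihψ =>
    simp only [BoundedFormula.realize_imp, ihφ hφ.1, ihψ hφ.2]
  | all _ ih =>
    simp only [BoundedFormula.realize_all, Quotient.forall, ← Fin.comp_snoc, ih hφ]

theorem EqualityFree.realize_sentence_quotient {φ : L.Sentence} (hφ : EqualityFree φ) :
    Quotient s ⊨ φ ↔ @Sentence.Realize _ M ps.toStructure φ := by
  have := hφ.realize_quotient_mk' (s := s) (default : Empty → M) (default : Fin 0 → M)
  rwa [Subsingleton.elim (Quotient.mk s ∘ default) default,
    Subsingleton.elim (Quotient.mk s ∘ default) default] at this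

end Quotient

namespace monadicLang

variable {k : ℕ} {M : Type*} [(monadicLang k).Structure M]

def colour (x : M) : Fin k → Prop :=
  fun i => Structure.RelMap (L := monadicLang k) (n := 1) i ![x]

variable (k M) in
abbrev sameColour : Setoid M :=
  Setoid.ker (colour (k := k) (M := M))

theorem relMap_eq_colour (r : (monadicLang k).Relations 1) (x : Fin 1 → M) :
    Structure.RelMap (L := monadicLang k) r x = colour (x 0) r :=
  congrArg _ (funext fun i => by fin_cases i; rfl)

instance : (monadicLang k).Prestructure (sameColour k M) where
  toStructure := ‹_›
  fun_equiv {_} f := Empty.elim f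
  rel_equiv {n} r x y hxy := match n, r with
    | 1, r => by rw [relMap_eq_colour, relMap_eq_colour, hxy 0]

theorem finite_quotient_sameColour : Finite (Quotient (sameColour k M)) :=
  Finite.of_injective _ (Setoid.kerLift_injective colour)

theorem card_quotient_sameColour_le : Nat.card (Quotient (sameColour k M)) ≤ 2 ^ k :=
  calc Nat.card (Quotient (sameColour k M)) ≤ Nat.card (Fin k → Prop) :=
        Nat.card_le_card_of_injective _ (Setoid.kerLift_injective colour)
    _ = 2 ^ k := by simp

end monadicLang

theorem monadic_equalityFree_small_model (k : ℕ) (φ : (monadicLang k).Sentence)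
    (hfree : EqualityFree φ)
    (hsat : ∃ (M : Type u) (S : (monadicLang k).Structure M),
      Nonempty M ∧ @Sentence.Realize (monadicLang k) M S φ) :
    ∃ (M : Type u) (S : (monadicLang k).Structure M),
      Nonempty M ∧ Finite M ∧ Nat.card M ≤ 2 ^ k ∧
        @Sentence.Realize (monadicLang k) M S φ := by
  obtain ⟨M, S, hne, hM⟩ := hsat
  exact ⟨Quotient (monadicLang.sameColour k M), inferInstance, hne.map (Quotient.mk _),
    monadicLang.finite_quotient_sameColour, monadicLang.card_quotient_sameColour_le,
    hfree.realize_sentence_quotient.2 hM⟩
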